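/- Let 0 < α < 1, η ≥ 0, λ ∈ ℝ with |λ| + η > 0, and let f, V be complex numbers and φ : ℝ → ℂ measurable satisfying |ξ|^((2α−1)/2) |V| ≤ (|λ| + ξ² + η)|φ(ξ)| + |f(ξ)| for a.e. ξ. Then c₁(|λ|+η)^(α/2−5/4) |V| ≤ √(π/2)(|λ|+η)^(−3/4) (∫_ℝ |ξ φ(ξ)|² dξ)^(1/2) + (√π/4)(|λ|+η)^(−5/4) (∫_ℝ |f(ξ)|² dξ)^(1/2), where c₁ = ∫_1^∞ (y−1)^(α/2−1/4)/y² dy. -/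

import Mathlib

/-!
Write `a = |λ| + η`. Multiplying the pointwise bound by `|ξ| / (a + ξ²)²` gives
`|ξ|^(α+1/2) |V| / (a + ξ²)² ≤ (a + ξ²)⁻¹ |ξ φ(ξ)| + |ξ| (a + ξ²)⁻² |f(ξ)|`; integrating and
applying Cauchy–Schwarz to both terms leaves three explicit integrals. The substitution
`y = 1 + ξ² / a` turns the left one into `c₁ a^(α/2 - 5/4)`. The two weights reduce, after
scaling `ξ = √a x`, to `Iₙ = ∫ (1 + x²)⁻ⁿ`, and integrating the derivative of `x (1 + x²)⁻ⁿ`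
over `ℝ` gives `Iₙ₊₁ = (2n - 1) / (2n) Iₙ`, so `I₂ = π/2` and `I₃ - I₄ = π/16` from `I₁ = π`.
-/

open MeasureTheory Real Filter Set Topology

lemma abs_mul_inv_one_add_sq_pow_le {x : ℝ} (hx : x ≠ 0) {n : ℕ} (hn : n ≠ 0) :
    |x * ((1 + x ^ 2) ^ n)⁻¹| ≤ |x|⁻¹ := by
  have hx2 : 0 < |x| := abs_pos.mpr hx
  have hle : |x| ^ 2 ≤ (1 + x ^ 2) ^ n := by
    rw [sq_abs]
    exact (le_add_of_nonneg_left zero_le_one).trans (le_self_pow₀ (le_add_of_nonneg_right (sq_nonneg x)) hn)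
  rw [abs_mul, abs_inv, abs_of_pos (by positivity : (0:ℝ) < (1 + x ^ 2) ^ n), ← div_eq_mul_inv,
    div_le_iff₀ (by positivity)]
  calc |x| = |x|⁻¹ * |x| ^ 2 := by field_simp
    _ ≤ |x|⁻¹ * (1 + x ^ 2) ^ n := by gcongr

lemma hasDerivAt_mul_inv_one_add_sq_pow (n : ℕ) (x : ℝ) :
    HasDerivAt (fun x : ℝ => x * ((1 + x ^ 2) ^ n)⁻¹)
      ((1 - 2 * n) * ((1 + x ^ 2) ^ n)⁻¹ + 2 * n * ((1 + x ^ 2) ^ (n + 1))⁻¹) x := by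
  have h0 : 1 + x ^ 2 ≠ 0 := by positivity
  have := (hasDerivAt_id x).mul
    ((((hasDerivAt_pow 2 x).const_add 1).fun_pow n).inv (pow_ne_zero n h0))
  refine this.congr_deriv ?_
  rcases n with _ | m
  · simp
  · simp only [id, Pi.inv_apply, Nat.add_sub_cancel]
    field_simp
    push_cast
    ring

lemma tendsto_mul_inv_one_add_sq_pow {l : Filter ℝ} (hl : Tendsto (|·|) l atTop) {n : ℕ}
    (hn : n ≠ 0) : Tendsto (fun x : ℝ => x * ((1 + x ^ 2) ^ n)⁻¹) l (𝓝 0) :=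
  squeeze_zero_norm' ((hl.eventually_gt_atTop 0).mono fun _ hx =>
      abs_mul_inv_one_add_sq_pow_le (abs_pos.mp hx) hn)
    (tendsto_inv_atTop_zero.comp hl)

lemma integrable_inv_one_add_sq_pow {n : ℕ} (hn : n ≠ 0) :
    Integrable fun x : ℝ => ((1 + x ^ 2) ^ n)⁻¹ := by
  refine integrable_inv_one_add_sq.mono' (by fun_prop) (Eventually.of_forall fun x => ?_)
  have h1 : 1 ≤ 1 + x ^ 2 := le_add_of_nonneg_right (sq_nonneg x)
  rw [norm_inv, Real.norm_of_nonneg (by positivity)]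
  exact inv_anti₀ (by positivity) (le_self_pow₀ h1 hn)

lemma integral_inv_one_add_sq_pow_succ {n : ℕ} (hn : n ≠ 0) :
    ∫ x : ℝ, ((1 + x ^ 2) ^ (n + 1))⁻¹ =
      (2 * n - 1 : ℝ) / (2 * n) * ∫ x : ℝ, ((1 + x ^ 2) ^ n)⁻¹ := by
  have hn' := integrable_inv_one_add_sq_pow hn
  have hn1 := integrable_inv_one_add_sq_pow n.succ_ne_zero
  have hI := integral_of_hasDerivAt_of_tendsto (hasDerivAt_mul_inv_one_add_sq_pow n)
    ((hn'.const_mul _).add (hn1.const_mul _))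
    (tendsto_mul_inv_one_add_sq_pow tendsto_abs_atBot_atTop hn)
    (tendsto_mul_inv_one_add_sq_pow tendsto_abs_atTop_atTop hn)
  rw [integral_add (hn'.const_mul _) (hn1.const_mul _), integral_const_mul, integral_const_mul,
    sub_self] at hI
  have : (n : ℝ) ≠ 0 := Nat.cast_ne_zero.mpr hn
  rw [div_mul_eq_mul_div, eq_div_iff (by positivity)]
  linear_combination hI

lemma integral_inv_one_add_sq_pow_two : ∫ x : ℝ, ((1 + x ^ 2) ^ 2)⁻¹ = π / 2 := by
  rw [integral_inv_one_add_sq_pow_succ one_ne_zero]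
  simp only [pow_one, integral_univ_inv_one_add_sq]
  norm_num
  ring

lemma integral_inv_one_add_sq_pow_three : ∫ x : ℝ, ((1 + x ^ 2) ^ 3)⁻¹ = 3 * π / 8 := by
  rw [integral_inv_one_add_sq_pow_succ two_ne_zero, integral_inv_one_add_sq_pow_two]
  norm_num
  ring

lemma integral_inv_one_add_sq_pow_four : ∫ x : ℝ, ((1 + x ^ 2) ^ 4)⁻¹ = 5 * π / 16 := by
  rw [integral_inv_one_add_sq_pow_succ three_ne_zero, integral_inv_one_add_sq_pow_three]
  norm_num
  ring

lemma inv_add_sq_pow_eq {a : ℝ} (ha : 0 < a) (n : ℕ) (x : ℝ) :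
    ((a + x ^ 2) ^ n)⁻¹ = (a ^ n)⁻¹ * ((1 + (x / √a) ^ 2) ^ n)⁻¹ := by
  rw [div_pow, sq_sqrt ha.le, ← mul_inv, ← mul_pow, mul_add, mul_one, mul_div_cancel₀ _ ha.ne']

lemma integrable_inv_add_sq_pow {a : ℝ} (ha : 0 < a) {n : ℕ} (hn : n ≠ 0) :
    Integrable fun x : ℝ => ((a + x ^ 2) ^ n)⁻¹ := by
  simp_rw [inv_add_sq_pow_eq ha]
  exact ((integrable_inv_one_add_sq_pow hn).comp_div (sqrt_pos.mpr ha).ne').const_mul _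

lemma integral_inv_add_sq_pow {a : ℝ} (ha : 0 < a) (n : ℕ) :
    ∫ x : ℝ, ((a + x ^ 2) ^ n)⁻¹ = a ^ ((1 : ℝ) / 2 - n) * ∫ x : ℝ, ((1 + x ^ 2) ^ n)⁻¹ := by
  simp_rw [inv_add_sq_pow_eq ha, integral_const_mul]
  rw [Measure.integral_comp_div (fun x => ((1 + x ^ 2) ^ n)⁻¹), smul_eq_mul,
    abs_of_pos (sqrt_pos.mpr ha), ← mul_assoc, rpow_sub ha, rpow_natCast, sqrt_eq_rpow]
  ring

lemma sqrt_mul_rpow {c a : ℝ} (hc : 0 ≤ c) (ha : 0 ≤ a) (r : ℝ) :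
    √(c * a ^ r) = √c * a ^ (r / 2) := by
  rw [sqrt_mul hc, sqrt_eq_rpow (a ^ r), ← rpow_mul ha, mul_one_div]

lemma sqrt_integral_inv_add_sq_sq {a : ℝ} (ha : 0 < a) :
    √(∫ x : ℝ, ((a + x ^ 2)⁻¹) ^ 2) = √(π / 2) * a ^ (-(3 : ℝ) / 4) := by
  simp_rw [inv_pow]
  rw [integral_inv_add_sq_pow ha, integral_inv_one_add_sq_pow_two, mul_comm,
    sqrt_mul_rpow (by positivity) ha.le]
  norm_num

lemma sq_abs_mul_inv_add_sq_sq {a : ℝ} (ha : 0 < a) (x : ℝ) :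
    (|x| * ((a + x ^ 2) ^ 2)⁻¹) ^ 2 = ((a + x ^ 2) ^ 3)⁻¹ - a * ((a + x ^ 2) ^ 4)⁻¹ := by
  have : 0 < a + x ^ 2 := by positivity
  field_simp
  rw [sq_abs]
  ring

lemma sqrt_integral_abs_mul_inv_add_sq_sq_sq {a : ℝ} (ha : 0 < a) :
    √(∫ x : ℝ, (|x| * ((a + x ^ 2) ^ 2)⁻¹) ^ 2) = √π / 4 * a ^ (-(5 : ℝ) / 4) := by
  simp_rw [sq_abs_mul_inv_add_sq_sq ha]
  rw [integral_sub (integrable_inv_add_sq_pow ha three_ne_zero)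
      ((integrable_inv_add_sq_pow ha four_ne_zero).const_mul a), integral_const_mul,
    integral_inv_add_sq_pow ha, integral_inv_add_sq_pow ha, integral_inv_one_add_sq_pow_three,
    integral_inv_one_add_sq_pow_four, ← mul_assoc, ← rpow_one_add' ha.le (by norm_num)]
  have h16 : √(π / 16) = √π / 4 := by
    rw [sqrt_div' _ (by norm_num), show (16 : ℝ) = 4 ^ 2 by norm_num, sqrt_sq (by norm_num)]
  rw [show (1 : ℝ) + (1 / 2 - (4 : ℕ)) = 1 / 2 - (3 : ℕ) by norm_num, ← mul_sub,
    show 3 * π / 8 - 5 * π / 16 = π / 16 by ring, mul_comm, sqrt_mul_rpow (by positivity) ha.le,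
    h16]
  norm_num

lemma image_one_add_sq_div_Ioi {a : ℝ} (ha : 0 < a) :
    (fun ξ : ℝ => 1 + ξ ^ 2 / a) '' Ioi 0 = Ioi 1 := by
  ext y
  constructor
  · rintro ⟨ξ, hξ, rfl⟩
    have : 0 < ξ := hξ
    simp only [mem_Ioi, lt_add_iff_pos_right]
    positivity
  · intro hy
    have hy1 : 0 < a * (y - 1) := mul_pos ha (sub_pos.mpr hy)
    refine ⟨√(a * (y - 1)), sqrt_pos.mpr hy1, ?_⟩
    simp only
    rw [sq_sqrt hy1.le]
    field_simp
    ring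

lemma integral_comp_one_add_sq_div_Ioi {E : Type*} [NormedAddCommGroup E] [NormedSpace ℝ E]
    (g : ℝ → E) {a : ℝ} (ha : 0 < a) :
    ∫ ξ in Ioi 0, (2 * ξ / a) • g (1 + ξ ^ 2 / a) = ∫ y in Ioi 1, g y := by
  have hderiv : ∀ ξ ∈ Ioi (0 : ℝ),
      HasDerivWithinAt (fun ξ : ℝ => 1 + ξ ^ 2 / a) (2 * ξ / a) (Ioi 0) ξ := fun ξ _ => by
    simpa using (((hasDerivAt_pow 2 ξ).div_const a).const_add 1).hasDerivWithinAt
  have hinj : InjOn (fun ξ : ℝ => 1 + ξ ^ 2 / a) (Ioi 0) := fun p hp q hq h => by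
    simp only [add_right_inj, div_left_inj' ha.ne'] at h
    exact (pow_left_inj₀ (le_of_lt hp) (le_of_lt hq) two_ne_zero).mp h
  rw [← image_one_add_sq_div_Ioi ha,
    integral_image_eq_integral_abs_deriv_smul measurableSet_Ioi hderiv hinj]
  refine setIntegral_congr_fun measurableSet_Ioi fun ξ hξ => ?_
  have : 0 < ξ := hξ
  rw [abs_of_pos (by positivity)]

lemma integral_Ioi_one_sub_one_rpow_div_sq {a : ℝ} (ha : 0 < a) (b : ℝ) :
    ∫ y in Ioi 1, (y - 1) ^ b / y ^ 2 =
      a ^ (1 - b) * ∫ ξ : ℝ, |ξ| ^ (2 * b + 1) * ((a + ξ ^ 2) ^ 2)⁻¹ := by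
  have h := integral_comp_abs (f := fun ξ : ℝ => ξ ^ (2 * b + 1) * ((a + ξ ^ 2) ^ 2)⁻¹)
  simp only [sq_abs] at h
  rw [h, ← integral_comp_one_add_sq_div_Ioi _ ha, ← integral_const_mul, ← integral_const_mul]
  refine setIntegral_congr_fun measurableSet_Ioi fun ξ hξ => ?_
  have hξ : 0 < ξ := hξ
  have hpow : (ξ ^ 2 / a) ^ b = ξ ^ (2 * b) / a ^ b := by
    rw [div_rpow (by positivity) ha.le, ← rpow_natCast, ← rpow_mul hξ.le, Nat.cast_ofNat]
  have hab : 0 < a ^ b := rpow_pos_of_pos ha b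
  simp only [smul_eq_mul, add_sub_cancel_left]
  rw [hpow, rpow_add_one hξ.ne', rpow_sub ha, rpow_one]
  field_simp

section CauchySchwarz

variable {α : Type*} [MeasurableSpace α] {μ : Measure α}

lemma integral_mul_le_sqrt_integral_sq_mul_sqrt_integral_sq {f g : α → ℝ} (hf0 : 0 ≤ᵐ[μ] f)
    (hg0 : 0 ≤ᵐ[μ] g) (hf : MemLp f 2 μ) (hg : MemLp g 2 μ) :
    ∫ x, f x * g x ∂μ ≤ √(∫ x, f x ^ 2 ∂μ) * √(∫ x, g x ^ 2 ∂μ) := by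
  have h := integral_mul_le_Lp_mul_Lq_of_nonneg HolderConjugate.two_two hf0 hg0
    (by simpa using hf) (by simpa using hg)
  simpa only [rpow_two, sqrt_eq_rpow] using h

lemma integral_le_of_ae_le_mul_add_mul {h w₁ g₁ w₂ g₂ : α → ℝ} (hh : 0 ≤ᵐ[μ] h)
    (hw₁0 : 0 ≤ᵐ[μ] w₁) (hg₁0 : 0 ≤ᵐ[μ] g₁) (hw₂0 : 0 ≤ᵐ[μ] w₂) (hg₂0 : 0 ≤ᵐ[μ] g₂)
    (hw₁ : MemLp w₁ 2 μ) (hg₁ : MemLp g₁ 2 μ) (hw₂ : MemLp w₂ 2 μ) (hg₂ : MemLp g₂ 2 μ)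
    (hle : ∀ᵐ x ∂μ, h x ≤ w₁ x * g₁ x + w₂ x * g₂ x) :
    ∫ x, h x ∂μ ≤ √(∫ x, w₁ x ^ 2 ∂μ) * √(∫ x, g₁ x ^ 2 ∂μ) +
      √(∫ x, w₂ x ^ 2 ∂μ) * √(∫ x, g₂ x ^ 2 ∂μ) := by
  have hi₁ : Integrable (fun x => w₁ x * g₁ x) μ := hw₁.integrable_mul hg₁
  have hi₂ : Integrable (fun x => w₂ x * g₂ x) μ := hw₂.integrable_mul hg₂
  calc ∫ x, h x ∂μ ≤ ∫ x, (w₁ x * g₁ x + w₂ x * g₂ x) ∂μ :=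
        integral_mono_of_nonneg hh (hi₁.add hi₂) hle
    _ = ∫ x, w₁ x * g₁ x ∂μ + ∫ x, w₂ x * g₂ x ∂μ := integral_add hi₁ hi₂
    _ ≤ _ := add_le_add
        (integral_mul_le_sqrt_integral_sq_mul_sqrt_integral_sq hw₁0 hg₁0 hw₁ hg₁)
        (integral_mul_le_sqrt_integral_sq_mul_sqrt_integral_sq hw₂0 hg₂0 hw₂ hg₂)

lemma memLp_two_norm_of_integrable_sq_norm {E : Type*} [NormedAddCommGroup E] {g : α → E}
    (hg : Integrable (fun x => ‖g x‖ ^ 2) μ) : MemLp (fun x => ‖g x‖) 2 μ := by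
  have hm : AEStronglyMeasurable (fun x => ‖g x‖) μ := by
    simpa only [sqrt_sq (norm_nonneg _)] using
      hg.aestronglyMeasurable.aemeasurable.sqrt.aestronglyMeasurable
  exact (memLp_two_iff_integrable_sq hm).mpr hg

end CauchySchwarz

lemma memLp_two_inv_add_sq {a : ℝ} (ha : 0 < a) : MemLp (fun x : ℝ => (a + x ^ 2)⁻¹) 2 := by
  refine (memLp_two_iff_integrable_sq (Continuous.aestronglyMeasurable ?_)).mpr ?_
  · exact continuous_const.add (continuous_pow 2) |>.inv₀ fun x => (by positivity : a + x ^ 2 ≠ 0)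
  · simpa only [inv_pow] using integrable_inv_add_sq_pow ha two_ne_zero

lemma memLp_two_abs_mul_inv_add_sq_sq {a : ℝ} (ha : 0 < a) :
    MemLp (fun x : ℝ => |x| * ((a + x ^ 2) ^ 2)⁻¹) 2 := by
  refine (memLp_two_iff_integrable_sq (Continuous.aestronglyMeasurable ?_)).mpr ?_
  · exact continuous_abs.mul
      ((continuous_const.add (continuous_pow 2)).pow 2 |>.inv₀
        fun x => (by positivity : (a + x ^ 2) ^ 2 ≠ 0))
  · simp_rw [sq_abs_mul_inv_add_sq_sq ha]
    exact (integrable_inv_add_sq_pow ha three_ne_zero).sub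
      ((integrable_inv_add_sq_pow ha four_ne_zero).const_mul a)

lemma rpow_add_one_mul_inv_add_sq_sq_le {a s x v p q : ℝ} (ha : 0 ≤ a) (hx : x ≠ 0)
    (h : |x| ^ s * v ≤ (a + x ^ 2) * p + q) :
    |x| ^ (s + 1) * ((a + x ^ 2) ^ 2)⁻¹ * v ≤
      (a + x ^ 2)⁻¹ * (|x| * p) + |x| * ((a + x ^ 2) ^ 2)⁻¹ * q := by
  have hpos : 0 < a + x ^ 2 := by positivity
  have hw : 0 ≤ |x| * ((a + x ^ 2) ^ 2)⁻¹ := by positivity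
  calc |x| ^ (s + 1) * ((a + x ^ 2) ^ 2)⁻¹ * v
      = |x| ^ s * v * (|x| * ((a + x ^ 2) ^ 2)⁻¹) := by
        rw [rpow_add_one (abs_ne_zero.mpr hx)]; ring
    _ ≤ ((a + x ^ 2) * p + q) * (|x| * ((a + x ^ 2) ^ 2)⁻¹) := mul_le_mul_of_nonneg_right h hw
    _ = (a + x ^ 2)⁻¹ * (|x| * p) + |x| * ((a + x ^ 2) ^ 2)⁻¹ * q := by field_simp

theorem statement15_general (α η lam : ℝ)
    (hpos : 0 < |lam| + η) (V : ℂ) (f φ : ℝ → ℂ)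
    (hφ : Integrable (fun ξ : ℝ => ‖(ξ : ℂ) * φ ξ‖ ^ 2))
    (hf : Integrable (fun ξ : ℝ => ‖f ξ‖ ^ 2))
    (hineq : ∀ᵐ ξ : ℝ, |ξ| ^ ((2 * α - 1) / 2) * ‖V‖ ≤
      (|lam| + ξ ^ 2 + η) * ‖φ ξ‖ + ‖f ξ‖) :
    (∫ y in Set.Ioi (1 : ℝ), (y - 1) ^ (α / 2 - 1 / 4) / y ^ 2) *
        (|lam| + η) ^ (α / 2 - 5 / 4) * ‖V‖ ≤
      Real.sqrt (Real.pi / 2) * (|lam| + η) ^ (-(3 : ℝ) / 4) *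
          Real.sqrt (∫ ξ : ℝ, ‖(ξ : ℂ) * φ ξ‖ ^ 2) +
        Real.sqrt Real.pi / 4 * (|lam| + η) ^ (-(5 : ℝ) / 4) *
          Real.sqrt (∫ ξ : ℝ, ‖f ξ‖ ^ 2) := by
  set a := |lam| + η
  have hc : (∫ y in Ioi (1 : ℝ), (y - 1) ^ (α / 2 - 1 / 4) / y ^ 2) * a ^ (α / 2 - 5 / 4) =
      ∫ ξ : ℝ, |ξ| ^ ((2 * α - 1) / 2 + 1) * ((a + ξ ^ 2) ^ 2)⁻¹ := by
    rw [integral_Ioi_one_sub_one_rpow_div_sq hpos, mul_right_comm, ← rpow_add hpos,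
      show 1 - (α / 2 - 1 / 4) + (α / 2 - 5 / 4) = 0 by ring, rpow_zero, one_mul,
      show 2 * (α / 2 - 1 / 4) + 1 = (2 * α - 1) / 2 + 1 by ring]
  rw [hc, ← integral_mul_const, ← sqrt_integral_inv_add_sq_sq hpos,
    ← sqrt_integral_abs_mul_inv_add_sq_sq_sq hpos]
  refine integral_le_of_ae_le_mul_add_mul (Eventually.of_forall fun ξ => by positivity)
    (Eventually.of_forall fun ξ => by positivity) (Eventually.of_forall fun ξ => norm_nonneg _)
    (Eventually.of_forall fun ξ => by positivity) (Eventually.of_forall fun ξ => norm_nonneg _)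
    (memLp_two_inv_add_sq hpos) (memLp_two_norm_of_integrable_sq_norm hφ)
    (memLp_two_abs_mul_inv_add_sq_sq hpos) (memLp_two_norm_of_integrable_sq_norm hf) ?_
  filter_upwards [hineq, volume.ae_ne 0] with ξ h hξ
  rw [norm_mul, Complex.norm_real, norm_eq_abs]
  exact rpow_add_one_mul_inv_add_sq_sq_le hpos.le hξ (by rwa [add_right_comm] at h)

theorem statement15 (α η lam : ℝ) (hα0 : 0 < α) (hα1 : α < 1) (hη : 0 ≤ η)
    (hpos : 0 < |lam| + η) (V : ℂ) (f φ : ℝ → ℂ)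
    (hmeasφ : Measurable φ) (hmeasf : Measurable f)
    (hφ : Integrable (fun ξ : ℝ => ‖(ξ : ℂ) * φ ξ‖ ^ 2))
    (hf : Integrable (fun ξ : ℝ => ‖f ξ‖ ^ 2))
    (hineq : ∀ᵐ ξ : ℝ, |ξ| ^ ((2 * α - 1) / 2) * ‖V‖ ≤
      (|lam| + ξ ^ 2 + η) * ‖φ ξ‖ + ‖f ξ‖) :
    (∫ y in Set.Ioi (1 : ℝ), (y - 1) ^ (α / 2 - 1 / 4) / y ^ 2) *
        (|lam| + η) ^ (α / 2 - 5 / 4) * ‖V‖ ≤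
      Real.sqrt (Real.pi / 2) * (|lam| + η) ^ (-(3 : ℝ) / 4) *
          Real.sqrt (∫ ξ : ℝ, ‖(ξ : ℂ) * φ ξ‖ ^ 2) +
        Real.sqrt Real.pi / 4 * (|lam| + η) ^ (-(5 : ℝ) / 4) *
          Real.sqrt (∫ ξ : ℝ, ‖f ξ‖ ^ 2) :=
  statement15_general α η lam hpos V f φ hφ hf hineq
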